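/- arXiv:0809.2493 — 2 statements merged into one kernel-verified Lean document; each statement's English description precedes it below -/
import Mathlib

section
/- For every integer k > 3, the cycle C_k on k vertices has rainbow connection number exactly ⌈k/2⌉. -/
/-- A coloring `χ` of (potential) edges makes `G` rainbow connected if every pair of
vertices is joined by a path whose edges receive pairwise distinct colors. -/
def SimpleGraph.IsRainbowConnected {V C : Type*} (G : SimpleGraph V) (χ : Sym2 V → C) : Prop :=
  ∀ u v : V, ∃ p : G.Walk u v, p.IsPath ∧ (p.edges.map χ).Nodup

/-- The rainbow connection number: the least number of colors of a coloring
making `G` rainbow connected. -/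
noncomputable def SimpleGraph.rc {V : Type*} (G : SimpleGraph V) : ℕ :=
  sInf {k : ℕ | ∃ χ : Sym2 V → Fin k, G.IsRainbowConnected χ}

/-!
Colour the edge `{x, x + 1}` of `C_k` by `x mod ⌈k/2⌉`. Any arc of at most `⌊k/2⌋` consecutive
edges is then rainbow, and every pair of vertices is joined by such an arc.

Conversely, suppose `n` colours with `2n < k` suffice. A walk of length `ℓ` on the cycle makes `a`
forward and `b` backward steps with `a + b = ℓ`; a rainbow path has length at most `n`, so the
rainbow path from `u` to `u + ⌊k/2⌋` must be the forward arc, and `n = ⌊k/2⌋`. Hence every arc of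
`⌊k/2⌋` edges is rainbow, so two edges of the same colour are at cyclic distance at least `⌊k/2⌋`
in both directions. For `k ≥ 4` three points of the cycle cannot be pairwise that far apart, so
each colour occurs at most twice and `k ≤ 2n`, a contradiction.
-/

open Fin.CommRing

namespace Fin

variable {k : ℕ}

lemma val_sub_eq_or (x y : Fin k) :
    (x ≤ y ∧ (y - x).val = y.val - x.val) ∨ (y < x ∧ (y - x).val = k + y.val - x.val) := by
  rcases le_or_gt x y with h | h
  · exact Or.inl ⟨h, Fin.sub_val_of_le h⟩
  · exact Or.inr ⟨h, Fin.coe_sub_iff_lt.mpr h⟩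

lemma val_sub_add_val_sub {x y : Fin k} (hxy : x ≠ y) : (y - x).val + (x - y).val = k := by
  rw [Ne, Fin.ext_iff] at hxy
  rcases val_sub_eq_or x y with ⟨o1, e1⟩ | ⟨o1, e1⟩ <;>
  rcases val_sub_eq_or y x with ⟨o2, e2⟩ | ⟨o2, e2⟩ <;>
  simp only [Fin.le_def, Fin.lt_def] at * <;> omega

lemma val_sub_add_val_sub_add_val_sub_eq_or {x y z : Fin k} (hxz : x ≠ z) :
    (y - x).val + (z - y).val + (x - z).val = k ∨ (z - x).val + (y - z).val + (x - y).val = k := by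
  rw [Ne, Fin.ext_iff] at hxz
  rcases val_sub_eq_or x y with ⟨o1, e1⟩ | ⟨o1, e1⟩ <;>
  rcases val_sub_eq_or y x with ⟨o2, e2⟩ | ⟨o2, e2⟩ <;>
  rcases val_sub_eq_or y z with ⟨o3, e3⟩ | ⟨o3, e3⟩ <;>
  rcases val_sub_eq_or z y with ⟨o4, e4⟩ | ⟨o4, e4⟩ <;>
  rcases val_sub_eq_or x z with ⟨o5, e5⟩ | ⟨o5, e5⟩ <;>
  rcases val_sub_eq_or z x with ⟨o6, e6⟩ | ⟨o6, e6⟩ <;>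
  simp only [Fin.le_def, Fin.lt_def] at * <;> omega

variable [NeZero k]

lemma add_one_add_one_ne (hk : 2 < k) (x : Fin k) : x + 1 + 1 ≠ x := by
  rw [add_assoc, Ne, add_eq_left, Fin.ext_iff]
  simp [Fin.val_add, Nat.mod_eq_of_lt hk]

lemma injective_sym2_mk_add_one (hk : 2 < k) : Function.Injective fun x : Fin k ↦ s(x, x + 1) := by
  intro x y h
  rcases Sym2.eq_iff.mp h with ⟨hxy, -⟩ | ⟨rfl, hyx⟩
  · exact hxy
  · exact absurd hyx (add_one_add_one_ne hk y)

/-- `c` is injective on every arc `{x, x + 1, …, x + (s - 1)}` of the cycle `Fin k`. -/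
def InjOnArcs {α : Type*} (c : Fin k → α) (s : ℕ) : Prop :=
  ∀ (x : Fin k) (d : ℕ), 0 < d → d < s → c (x + d) ≠ c x

variable {α : Type*} {c : Fin k → α} {s : ℕ}

lemma InjOnArcs.le_val_sub (h : InjOnArcs c s) {x y : Fin k} (hxy : x ≠ y) (hc : c x = c y) :
    s ≤ (y - x).val := by
  by_contra! hlt
  have hd : 0 < (y - x).val := by
    rw [Nat.pos_iff_ne_zero, Fin.val_ne_zero_iff, sub_ne_zero]
    exact hxy.symm
  exact h x _ hd hlt (by rw [Fin.cast_val_eq_self, add_sub_cancel, hc])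

lemma InjOnArcs.card_le_two_mul [Fintype α] [DecidableEq α] (h : InjOnArcs c s)
    (hs : k < 3 * s) : k ≤ 2 * Fintype.card α := by
  by_contra! hlt
  obtain ⟨a, ha⟩ := Fintype.exists_lt_card_fiber_of_mul_lt_card c (n := 2)
    (by rw [Fintype.card_fin, mul_comm]; exact hlt)
  obtain ⟨x, hx, y, hy, z, hz, hxy, hxz, hyz⟩ := Finset.two_lt_card.mp ha
  simp only [Finset.mem_filter, Finset.mem_univ, true_and] at hx hy hz
  have hsep {p q : Fin k} (hp : c p = a) (hq : c q = a) (hpq : p ≠ q) : s ≤ (q - p).val :=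
    h.le_val_sub hpq (hp.trans hq.symm)
  have := hsep hx hy hxy
  have := hsep hy hx hxy.symm
  have := hsep hy hz hyz
  have := hsep hz hy hyz.symm
  have := hsep hx hz hxz
  have := hsep hz hx hxz.symm
  have := val_sub_add_val_sub_add_val_sub_eq_or (y := y) hxz
  omega

lemma InjOnArcs.nodup_map_range (h : InjOnArcs c s) {l : ℕ} (hl : l ≤ s) (u : Fin k) :
    ((List.range l).map fun i : ℕ ↦ c (u + i)).Nodup := by
  refine List.Nodup.map_on (fun i hi j hj hij ↦ ?_) List.nodup_range
  rw [List.mem_range] at hi hj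
  by_contra hne
  wlog hlt : i < j generalizing i j
  · exact this j hj i hi hij.symm (Ne.symm hne) (by omega)
  refine h (u + i) (j - i) (by omega) (by omega) ?_
  rw [add_assoc, ← Nat.cast_add, Nat.add_sub_cancel' hlt.le, hij]

lemma injOnArcs_of_forall_nodup
    (h : ∀ u : Fin k, ((List.range s).map fun i : ℕ ↦ c (u + i)).Nodup) : InjOnArcs c s := by
  intro x d hd hds hc
  have := List.inj_on_of_nodup_map (h x) (List.mem_range.2 hds)
    (List.mem_range.2 (hd.trans hds)) (by simpa using hc)
  omega

/-- Two distinct points of `Fin k` with the same residue mod `m` differ by exactly `m` (as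
`k ≤ 2m`), which is a cyclic distance of `m` one way and `k - m` the other. -/
lemma injOnArcs_natCast_val {m : ℕ} [NeZero m] (hkm : k ≤ 2 * m) :
    InjOnArcs (fun x : Fin k ↦ (x.val : Fin m)) (k - m) := by
  intro x d hd hdk hc
  rw [CharP.natCast_eq_natCast (Fin m) m, Fin.val_add, Fin.val_natCast,
    Nat.mod_eq_of_lt (by omega : d < k)] at hc
  have hx := x.isLt
  rcases lt_or_ge (x.val + d) k with hlt | hge
  · rw [Nat.mod_eq_of_lt hlt] at hc
    have := Nat.le_of_dvd hd (by simpa using (Nat.modEq_iff_dvd' (by omega)).mp hc.symm)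
    omega
  · rw [Nat.mod_eq_sub_mod hge, Nat.mod_eq_of_lt (by omega)] at hc
    have := Nat.eq_of_dvd_of_lt_two_mul (by omega) ((Nat.modEq_iff_dvd' (by omega)).mp hc)
      (by omega)
    omega

end Fin

namespace SimpleGraph

open Fin

section Rainbow

variable {V : Type*} {G : SimpleGraph V}

lemma Walk.length_le_card_of_nodup_map {C : Type*} [Fintype C] {χ : Sym2 V → C} {u v : V}
    (p : G.Walk u v) (h : (p.edges.map χ).Nodup) : p.length ≤ Fintype.card C := by
  simpa using h.length_le_card

lemma rc_eq_of_isRainbowConnected {m : ℕ} {χ : Sym2 V → Fin m} (hχ : G.IsRainbowConnected χ)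
    (hle : ∀ n (χ : Sym2 V → Fin n), G.IsRainbowConnected χ → m ≤ n) : G.rc = m :=
  le_antisymm (Nat.sInf_le ⟨χ, hχ⟩) (le_csInf ⟨m, χ, hχ⟩ fun _ ⟨χ', hχ'⟩ ↦ hle _ χ' hχ')

end Rainbow

variable {k : ℕ} [NeZero k]

lemma cycleGraph_adj_iff (hk : 1 < k) {x y : Fin k} :
    (cycleGraph k).Adj x y ↔ x = y + 1 ∨ y = x + 1 := by
  have val_eq_one (z : Fin k) : z.val = 1 ↔ z = 1 := by
    rw [Fin.ext_iff, Fin.val_one', Nat.mod_eq_of_lt hk]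
  rw [cycleGraph_adj', val_eq_one, val_eq_one, sub_eq_iff_eq_add', sub_eq_iff_eq_add']

def cycleArc (hk : 1 < k) (u : Fin k) : (n : ℕ) → (cycleGraph k).Walk u (u + n)
  | 0 => Walk.nil.copy rfl (by simp)
  | n + 1 => ((cycleArc hk u n).concat ((cycleGraph_adj_iff hk).2 (Or.inr rfl))).copy rfl
      (by push_cast; ring)

section cycleArc

variable (hk : 1 < k) (u : Fin k)

lemma edges_cycleArc (n : ℕ) :
    (cycleArc hk u n).edges = (List.range n).map fun i : ℕ ↦ s(u + i, u + i + 1) := by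
  induction n with
  | zero => simp [cycleArc]
  | succ n ih => simp [cycleArc, ih, List.range_succ]

lemma support_cycleArc (n : ℕ) :
    (cycleArc hk u n).support = (List.range (n + 1)).map fun i : ℕ ↦ u + i := by
  induction n with
  | zero => simp [cycleArc]
  | succ n ih => simp [cycleArc, ih, List.range_succ (n := n + 1), add_assoc]

lemma isPath_cycleArc {n : ℕ} (hn : n < k) : (cycleArc hk u n).IsPath := by
  rw [Walk.isPath_def, support_cycleArc]
  refine List.Nodup.map_on (fun i hi j hj hij ↦ ?_) List.nodup_range
  rw [List.mem_range] at hi hj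
  exact CharP.natCast_injOn_Iio (Fin k) k (by simp; omega) (by simp; omega) (add_left_cancel hij)

end cycleArc

lemma Walk.exists_forward_backward_steps (hk : 1 < k) {u v : Fin k}
    (p : (cycleGraph k).Walk u v) :
    ∃ a b : ℕ, a + b = p.length ∧ u + a = v + b ∧
      (b = 0 → p.edges = (List.range a).map fun i : ℕ ↦ s(u + i, u + i + 1)) := by
  induction p with
  | nil => exact ⟨0, 0, rfl, rfl, fun _ ↦ rfl⟩
  | @cons x y z h q ih =>
    obtain ⟨a, b, hlen, hend, hedges⟩ := ih
    rcases (cycleGraph_adj_iff hk).1 h with rfl | rfl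
    · refine ⟨a, b + 1, by simp [← hlen]; omega, ?_, by simp⟩
      rw [add_right_comm, hend]
      push_cast
      ring
    · refine ⟨a + 1, b, by simp [← hlen]; omega, ?_, fun hb ↦ ?_⟩
      · rw [← hend]
        push_cast
        ring
      · rw [Walk.edges_cons, hedges hb, List.range_succ_eq_map]
        simp [add_assoc, add_comm (1 : Fin k)]

lemma cycleGraph_isRainbowConnected_of_injOnArcs (hk : 1 < k) {C : Type*}
    {χ : Sym2 (Fin k) → C} (hχ : InjOnArcs (fun x ↦ χ s(x, x + 1)) (k / 2)) :
    (cycleGraph k).IsRainbowConnected χ := by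
  have arc (u : Fin k) (d : ℕ) (hd : d ≤ k / 2) :
      ∃ p : (cycleGraph k).Walk u (u + d), p.IsPath ∧ (p.edges.map χ).Nodup := by
    refine ⟨cycleArc hk u d, isPath_cycleArc hk u (by omega), ?_⟩
    rw [edges_cycleArc, List.map_map]
    exact hχ.nodup_map_range hd u
  intro u v
  obtain rfl | huv := eq_or_ne u v
  · exact ⟨Walk.nil, Walk.IsPath.nil, List.nodup_nil⟩
  have hsum := val_sub_add_val_sub huv
  rcases le_or_gt (v - u).val (k / 2) with hd | hd
  · obtain ⟨p, hp, hχp⟩ := arc u _ hd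
    have hv : u + ((v - u).val : Fin k) = v := by rw [Fin.cast_val_eq_self, add_sub_cancel]
    exact ⟨p.copy rfl hv, by simpa using hp, by simpa using hχp⟩
  · obtain ⟨p, hp, hχp⟩ := arc v (u - v).val (by omega)
    have hu : v + ((u - v).val : Fin k) = u := by rw [Fin.cast_val_eq_self, add_sub_cancel]
    refine ⟨(p.copy rfl hu).reverse, (Walk.isPath_copy _ _ _ |>.2 hp).reverse, ?_⟩
    simpa [List.map_reverse] using hχp

lemma exists_isRainbowConnected_cycleGraph (hk : 2 < k) :
    ∃ χ : Sym2 (Fin k) → Fin ((k + 1) / 2), (cycleGraph k).IsRainbowConnected χ := by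
  have : NeZero ((k + 1) / 2) := ⟨by omega⟩
  let χ := Function.extend (fun x : Fin k ↦ s(x, x + 1)) (fun x ↦ (x.val : Fin ((k + 1) / 2)))
    fun _ ↦ 0
  have hχ : (fun x ↦ χ s(x, x + 1)) = fun x : Fin k ↦ (x.val : Fin ((k + 1) / 2)) :=
    funext ((injective_sym2_mk_add_one hk).extend_apply _ _)
  refine ⟨χ, cycleGraph_isRainbowConnected_of_injOnArcs (by omega) ?_⟩
  rw [hχ, show k / 2 = k - (k + 1) / 2 by omega]
  exact injOnArcs_natCast_val (by omega)

lemma le_of_isRainbowConnected_cycleGraph (hk : 3 < k) {n : ℕ} {χ : Sym2 (Fin k) → Fin n}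
    (h : (cycleGraph k).IsRainbowConnected χ) : (k + 1) / 2 ≤ n := by
  by_contra! hn
  have harcs : InjOnArcs (fun x ↦ χ s(x, x + 1)) (k / 2) := by
    refine injOnArcs_of_forall_nodup fun u ↦ ?_
    obtain ⟨p, -, hp⟩ := h u (u + (k / 2 : ℕ))
    obtain ⟨a, b, hlen, hend, hedges⟩ := p.exists_forward_backward_steps (by omega)
    have hpn : p.length ≤ n := by simpa using p.length_le_card_of_nodup_map hp
    rw [add_assoc, add_right_inj, ← Nat.cast_add, CharP.natCast_eq_natCast (Fin k) k] at hend
    obtain rfl : a = k / 2 + b := hend.eq_of_lt_of_lt (by omega) (by omega)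
    obtain rfl : b = 0 := by omega
    rw [hedges rfl, List.map_map] at hp
    exact hp
  have := harcs.card_le_two_mul (by omega)
  rw [Fintype.card_fin] at this
  omega

end SimpleGraph

theorem stmt_4 (k : ℕ) (hk : 3 < k) :
    (SimpleGraph.cycleGraph k).rc = ⌈(k : ℚ) / 2⌉ := by
  have : NeZero k := ⟨by omega⟩
  obtain ⟨χ, hχ⟩ := SimpleGraph.exists_isRainbowConnected_cycleGraph (k := k) (by omega)
  rw [SimpleGraph.rc_eq_of_isRainbowConnected hχ fun _ _ ↦
    SimpleGraph.le_of_isRainbowConnected_cycleGraph hk,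
    show (2 : ℚ) = ((2 : ℕ) : ℚ) by norm_num, Rat.ceil_natCast_div_natCast]
  omega
end

section
/- Let G be a graph whose edge set is partitioned so that some subset of edges forms a connected subtree T meeting every part of a vertex partition V_1, …, V_k, the edges of T receive pairwise distinct fresh colors, and under the remaining coloring every pair of vertices inside a common part V_i is joined both by a rainbow path using only colors from a set {a_1,…,a_4} and by a rainbow path using only colors from a disjoint set {b_1,…,b_4}. Then G is rainbow connected under the combined coloring, and rc(G) ≤ |E(T)| + 8. -/
namespace SimpleGraph

variable {V C D : Type*} {G : SimpleGraph V} {χ : Sym2 V → C}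

def Walk.IsRainbow (χ : Sym2 V → C) {u v : V} (p : G.Walk u v) : Prop :=
  (p.edges.map χ).Nodup

namespace Walk.IsRainbow

variable {u v w : V}

theorem append {p : G.Walk u v} {q : G.Walk v w} (hp : p.IsRainbow χ) (hq : q.IsRainbow χ)
    (hpq : ∀ e ∈ p.edges, ∀ f ∈ q.edges, χ e ≠ χ f) : (p.append q).IsRainbow χ := by
  simpa only [IsRainbow, edges_append, List.map_append, List.nodup_append, List.mem_map,
    forall_exists_index, and_imp, forall_apply_eq_imp_iff₂] using ⟨hp, hq, hpq⟩

theorem append_append {x : V} {p : G.Walk u v} {r : G.Walk v w} {q : G.Walk w x}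
    (hp : p.IsRainbow χ) (hr : r.IsRainbow χ) (hq : q.IsRainbow χ)
    (hpr : ∀ e ∈ p.edges, ∀ f ∈ r.edges, χ e ≠ χ f)
    (hpq : ∀ e ∈ p.edges, ∀ f ∈ q.edges, χ e ≠ χ f)
    (hrq : ∀ e ∈ r.edges, ∀ f ∈ q.edges, χ e ≠ χ f) : (p.append (r.append q)).IsRainbow χ :=
  hp.append (hr.append hq hrq) fun e he f hf => by
    rw [edges_append, List.mem_append] at hf
    exact hf.elim (hpr e he f) (hpq e he f)

theorem bypass [DecidableEq V] {p : G.Walk u v} (hp : p.IsRainbow χ) : p.bypass.IsRainbow χ :=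
  hp.sublist (p.edges_bypass_sublist_edges.map χ)

end Walk.IsRainbow

theorem isRainbowConnected_of_forall_exists_isRainbow
    (h : ∀ u v : V, ∃ p : G.Walk u v, p.IsRainbow χ) : G.IsRainbowConnected χ := by
  classical
  intro u v
  obtain ⟨p, hp⟩ := h u v
  exact ⟨p.bypass, p.bypass_isPath, hp.bypass⟩

theorem Subgraph.Preconnected.exists_isRainbow_walk {H : G.Subgraph} (hH : H.Preconnected)
    (hχ : Set.InjOn χ H.edgeSet) {u v : V} (hu : u ∈ H.verts) (hv : v ∈ H.verts) :
    ∃ p : G.Walk u v, p.IsRainbow χ ∧ ∀ e ∈ p.edges, e ∈ H.edgeSet := by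
  classical
  obtain ⟨p, hpH⟩ := (Subgraph.preconnected_iff_forall_exists_walk_subgraph H).mp hH hu hv
  have hH : ∀ e ∈ p.bypass.edges, e ∈ H.edgeSet := fun e he =>
    Subgraph.edgeSet_mono hpH <| p.mem_edges_toSubgraph.mpr (p.edges_bypass_subset_edges he)
  exact ⟨p.bypass, p.bypass_isPath.edges_nodup.map_on fun e he f hf =>
    hχ (hH e he) (hH f hf), hH⟩

theorem IsRainbowConnected.of_comp {f : C → D} (h : G.IsRainbowConnected (f ∘ χ)) :
    G.IsRainbowConnected χ := by
  intro u v
  obtain ⟨p, hp, hpf⟩ := h u v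
  exact ⟨p, hp, List.Nodup.of_map f (by rwa [List.map_map])⟩

theorem IsRainbowConnected.rc_le_natCard_range [Finite (Set.range χ)]
    (h : G.IsRainbowConnected χ) : G.rc ≤ Nat.card (Set.range χ) := by
  let e := Finite.equivFin (Set.range χ)
  refine Nat.sInf_le ⟨e ∘ Set.rangeFactorization χ,
    IsRainbowConnected.of_comp (f := Subtype.val ∘ e.symm) ?_⟩
  convert h using 2
  ext
  exact congrArg Subtype.val (e.symm_apply_apply _)

end SimpleGraph

theorem Set.natCard_range_le_of_inr_mem {X α β : Type*} [Finite α] {s : Set β} (hs : s.Finite)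
    {χ : X → α ⊕ β} (h : ∀ x b, χ x = Sum.inr b → b ∈ s) :
    Nat.card (Set.range χ) ≤ Nat.card α + s.ncard := by
  have hrange : Set.range χ ⊆ Set.range Sum.inl ∪ Sum.inr '' s := by
    rintro _ ⟨x, rfl⟩
    rcases hχx : χ x with a | b
    · exact Or.inl ⟨a, rfl⟩
    · exact Or.inr ⟨b, h x b hχx, rfl⟩
  have hfin : (Set.range (Sum.inl : α → α ⊕ β) ∪ Sum.inr '' s).Finite :=
    (Set.finite_range _).union (hs.image _)
  calc Nat.card (Set.range χ)
      ≤ (Set.range (Sum.inl : α → α ⊕ β)).ncard + (Sum.inr '' s).ncard := by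
        rw [Nat.card_coe_set_eq]
        exact (Set.ncard_le_ncard hrange hfin).trans (Set.ncard_union_le _ _)
    _ = Nat.card α + s.ncard := by
        rw [Set.ncard_range_of_injective Sum.inl_injective,
          Set.ncard_image_of_injective _ Sum.inr_injective]

open SimpleGraph

theorem stmt_18_general {V ι : Type*} [Fintype V] (G : SimpleGraph V)
    (Part : V → ι) (T : G.Subgraph) (hTconn : T.Connected)
    (hTmeets : ∀ i : ι, ∃ t ∈ T.verts, Part t = i)
    (χ : Sym2 V → (Fin 4 ⊕ Fin 4) ⊕ Sym2 V)
    (hfresh : ∀ e ∈ T.edgeSet, χ e = Sum.inr e)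
    (hfresh' : ∀ e ∉ T.edgeSet, ∀ c : Sym2 V, χ e ≠ Sum.inr c)
    (ha : ∀ u v : V, Part u = Part v → ∃ p : G.Walk u v, p.IsPath ∧
        (∀ e ∈ p.edges, ∃ c : Fin 4, χ e = Sum.inl (Sum.inl c)) ∧ (p.edges.map χ).Nodup)
    (hb : ∀ u v : V, Part u = Part v → ∃ p : G.Walk u v, p.IsPath ∧
        (∀ e ∈ p.edges, ∃ c : Fin 4, χ e = Sum.inl (Sum.inr c)) ∧ (p.edges.map χ).Nodup) :
    G.IsRainbowConnected χ ∧ G.rc ≤ T.edgeSet.ncard + 8 := by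
  have hTinj : Set.InjOn χ T.edgeSet := fun e he f hf hef =>
    Sum.inr_injective ((hfresh e he).symm.trans (hef.trans (hfresh f hf)))
  have hRC : G.IsRainbowConnected χ := by
    refine isRainbowConnected_of_forall_exists_isRainbow fun u v => ?_
    obtain ⟨tu, htu, hu⟩ := hTmeets (Part u)
    obtain ⟨tv, htv, hv⟩ := hTmeets (Part v)
    obtain ⟨p, -, hpa, hp⟩ := ha u tu hu.symm
    obtain ⟨q, -, hqb, hq⟩ := hb tv v hv
    obtain ⟨r, hr, hrT⟩ := hTconn.preconnected.exists_isRainbow_walk hTinj htu htv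
    refine ⟨_, Walk.IsRainbow.append_append hp hr hq ?_ ?_ ?_⟩ <;> intro e he f hf
    · obtain ⟨c, hc⟩ := hpa e he
      simp [hc, hfresh f (hrT f hf)]
    · obtain ⟨c, hc⟩ := hpa e he
      obtain ⟨d, hd⟩ := hqb f hf
      simp [hc, hd]
    · obtain ⟨d, hd⟩ := hqb f hf
      simp [hfresh e (hrT e he), hd]
  have hcolors : ∀ e c, χ e = Sum.inr c → c ∈ T.edgeSet := fun e c hc => by
    have he : e ∈ T.edgeSet := by_contra fun he => hfresh' e he c hc
    rwa [Sum.inr_injective (hc.symm.trans (hfresh e he))]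
  refine ⟨hRC, hRC.rc_le_natCard_range.trans ?_⟩
  calc Nat.card (Set.range χ) ≤ Nat.card (Fin 4 ⊕ Fin 4) + T.edgeSet.ncard :=
        Set.natCard_range_le_of_inr_mem (Set.toFinite _) hcolors
    _ = T.edgeSet.ncard + 8 := by simp [add_comm]

/-- Lemma 3.4: if a connected subtree `T` of `G` meets every part of the vertex
partition (given by `Part : V → ι`), the edges of `T` get pairwise distinct fresh colors
(modeled as `Sum.inr e`, occurring only on `T`'s edges), and every pair of vertices in a
common part is joined by a rainbow path using only the `a`-colors `Sum.inl (Sum.inl _)`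
and also by one using only the `b`-colors `Sum.inl (Sum.inr _)`, then the combined
coloring makes `G` rainbow connected; consequently `rc(G) ≤ |E(T)| + 8`. -/
theorem stmt_18 {V ι : Type*} [Fintype V] (G : SimpleGraph V)
    (Part : V → ι) (T : G.Subgraph) (hTconn : T.Connected) (hTtree : T.coe.IsAcyclic)
    (hTmeets : ∀ i : ι, ∃ t ∈ T.verts, Part t = i)
    (χ : Sym2 V → (Fin 4 ⊕ Fin 4) ⊕ Sym2 V)
    (hfresh : ∀ e ∈ T.edgeSet, χ e = Sum.inr e)
    (hfresh' : ∀ e ∉ T.edgeSet, ∀ c : Sym2 V, χ e ≠ Sum.inr c)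
    (ha : ∀ u v : V, Part u = Part v → ∃ p : G.Walk u v, p.IsPath ∧
        (∀ e ∈ p.edges, ∃ c : Fin 4, χ e = Sum.inl (Sum.inl c)) ∧ (p.edges.map χ).Nodup)
    (hb : ∀ u v : V, Part u = Part v → ∃ p : G.Walk u v, p.IsPath ∧
        (∀ e ∈ p.edges, ∃ c : Fin 4, χ e = Sum.inl (Sum.inr c)) ∧ (p.edges.map χ).Nodup) :
    G.IsRainbowConnected χ ∧ G.rc ≤ T.edgeSet.ncard + 8 :=
  stmt_18_general G Part T hTconn hTmeets χ hfresh hfresh' ha hb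
end
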